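/- Let P be a graded poset with finite principal ideals and let M be a rayless Morse matching on P. Then there exists a function f : P → ℝ such that: (i) for every x ∈ P, each of the sets u_f(x) = {y ∈ P : y covers x and f(y) ≤ f(x)} and d_f(x) = {y ∈ P : x covers y and f(y) ≥ f(x)} has at most one element (f is a discrete Morse function); (ii) the set of Hasse-diagram arrows {(z, x) : z covers x and f(z) ≤ f(x)} is exactly the matching M (f induces the matching M); and (iii) f(c) = deg(c) for every critical element c of M (f is self-indexing). -/

import Mathlib

/-- A directed simple path of length `n` in the digraph with arrow relation `A`:
a sequence `p 0, …, p n` of pairwise distinct vertices with an arrow from each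
vertex to the next. -/
def IsPathOn {V : Type*} (A : V → V → Prop) (n : ℕ) (p : ℕ → V) : Prop :=
  (∀ i j, i ≤ n → j ≤ n → p i = p j → i = j) ∧ ∀ i, i < n → A (p i) (p (i + 1))

/-- A digraph is acyclic if no directed simple path can be closed up by an arrow
from its last vertex to its first. -/
def DAcyclic {V : Type*} (A : V → V → Prop) : Prop :=
  ¬ ∃ (n : ℕ) (p : ℕ → V), IsPathOn A n p ∧ A (p n) (p 0)

/-- A (directed) ray: pairwise distinct vertices `r 0, r 1, …` with an arrow from
`r i` to `r (i+1)` for every `i`. -/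
def IsRay {V : Type*} (A : V → V → Prop) (r : ℕ → V) : Prop :=
  Function.Injective r ∧ ∀ i : ℕ, A (r i) (r (i + 1))

/-- A digraph is rayless if it contains no ray. -/
def Rayless {V : Type*} (A : V → V → Prop) : Prop := ¬ ∃ r : ℕ → V, IsRay A r

/-- Two rays are equivalent if they coincide from some point on. -/
def RayEquiv {V : Type*} (r s : ℕ → V) : Prop :=
  ∃ M N : ℕ, ∀ i : ℕ, r (M + i) = s (N + i)

/-- The ray `r` has a bypass starting at `r n`: a directed simple path, not
contained in `r`, from `r n` to `r (n + k)` for some `k > 0`. -/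
def HasBypassAt {V : Type*} (A : V → V → Prop) (r : ℕ → V) (n : ℕ) : Prop :=
  ∃ k : ℕ, 0 < k ∧ ∃ (m : ℕ) (p : ℕ → V), IsPathOn A m p ∧ p 0 = r n ∧
    p m = r (n + k) ∧ ∃ i ≤ m, ∀ j : ℕ, p i ≠ r j

/-- A multiray: a ray having bypasses starting arbitrarily far along it. -/
def IsMultiray {V : Type*} (A : V → V → Prop) (r : ℕ → V) : Prop :=
  IsRay A r ∧ ∀ N : ℕ, ∃ i : ℕ, HasBypassAt A r (N + i)

/-- The family of equivalence classes of rays of the digraph `A`. -/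
def RayClasses {V : Type*} (A : V → V → Prop) : Set (Set (ℕ → V)) :=
  {C | ∃ r : ℕ → V, IsRay A r ∧ C = {s | IsRay A s ∧ RayEquiv r s}}

section Poset

variable {P : Type*} [PartialOrder P]

/-- A chain contained in the principal ideal `x↓`. -/
def IsChainIn (x : P) (C : Set P) : Prop := C ⊆ Set.Iic x ∧ IsChain (· ≤ ·) C

/-- A maximal chain in the principal ideal `x↓`. -/
def IsMaxChainIn (x : P) (C : Set P) : Prop :=
  IsChainIn x C ∧ ∀ D : Set P, IsChainIn x D → C ⊆ D → C = D

/-- `P` is graded with degree function `deg`: for every `x`, every maximal chain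
in `x↓` is finite of length `deg x` (i.e. cardinality `deg x + 1`). -/
def GradedDeg (deg : P → ℕ) : Prop :=
  ∀ x : P, ∀ C : Set P, IsMaxChainIn x C → C.Finite ∧ C.ncard = deg x + 1

/-- A matching on the Hasse diagram of `P`: a set of arrows `(x, y)` (where `x`
covers `y`) no two of which share a vertex. -/
def IsMatching (M : Set (P × P)) : Prop :=
  (∀ e ∈ M, e.2 ⋖ e.1) ∧
  ∀ e ∈ M, ∀ f ∈ M, e ≠ f → e.1 ≠ f.1 ∧ e.1 ≠ f.2 ∧ e.2 ≠ f.1 ∧ e.2 ≠ f.2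

/-- The arrow relation of the digraph `H_M(P)`, obtained from the Hasse diagram
of `P` by reversing the arrows belonging to `M`. -/
def HasseM (M : Set (P × P)) (x y : P) : Prop :=
  (y ⋖ x ∧ (x, y) ∉ M) ∨ (y, x) ∈ M

/-- A Morse matching: a matching `M` on the Hasse diagram such that `H_M(P)` is
acyclic. -/
def IsMorse (M : Set (P × P)) : Prop := IsMatching M ∧ DAcyclic (HasseM M)

/-- An element is critical for `M` if it is matched with no other element. -/
def Critical (M : Set (P × P)) (x : P) : Prop := ∀ e ∈ M, e.1 ≠ x ∧ e.2 ≠ x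

/-- The set of critical elements of the matching `M`. -/
def Crit (M : Set (P × P)) : Set P := {x | Critical M x}

/-- The degree of a ray `r`: the minimal degree of an element appearing on `r`. -/
noncomputable def rayDeg (deg : P → ℕ) (r : ℕ → P) : ℕ := sInf {i | ∃ j : ℕ, deg (r j) = i}

/-- `M₊(x)`: if `x` is matched with an element `z` of degree `deg x + 1`, the set
of elements `y ≠ x` covered by `z`; otherwise empty. -/
def Mplus (M : Set (P × P)) (deg : P → ℕ) (x : P) : Set P :=
  {y | ∃ z : P, (z, x) ∈ M ∧ deg z = deg x + 1 ∧ y ≠ x ∧ y ⋖ z}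

/-- The stages `Dₖ(x)` of the construction of `D_M(x)`. -/
def Dk (M : Set (P × P)) (deg : P → ℕ) (x : P) : ℕ → Set P
  | 0 => {x}
  | (k + 1) => Dk M deg x k ∪ ⋃ y ∈ Dk M deg x k, Mplus M deg y

/-- The vertex set of the digraph `D_M(x)`. -/
def Dset (M : Set (P × P)) (deg : P → ℕ) (x : P) : Set P := ⋃ k : ℕ, Dk M deg x k

/-- The arrow relation of the digraph `D_M(x)`: an arrow from `y` to each element
of `M₊(y)`. -/
def DArrow (M : Set (P × P)) (deg : P → ℕ) (x : P) (y z : P) : Prop :=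
  y ∈ Dset M deg x ∧ z ∈ Mplus M deg y

/-- `L_M(x)`: the length of the longest directed simple path in `D_M(x)`. -/
noncomputable def LM (M : Set (P × P)) (deg : P → ℕ) (x : P) : ℕ :=
  sSup {n | ∃ p : ℕ → P, IsPathOn (DArrow M deg x) n p ∧ ∀ i ≤ n, p i ∈ Dset M deg x}

end Poset

/-!
Give a matched pair `(z, x)` (so `z ⋗ x`) the values `f z = deg z - 1/2 + ρ` and
`f x = deg x + 1/2 + ρ`, which coincide, and every critical `c` the value `deg c`, where
`ρ ∈ [0, 1/2)` depends on the pair. For a cover `x ⋖ z` with `(z, x) ∉ M` this forces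
`f x < f z`, except possibly when `x` is the bottom of a pair `e'` and `z` the top of another
pair `e`; there `ρ e' < ρ e` is needed. Since `z → x → top of e'` is a path in `H_M(P)`, a
descending chain for this relation on pairs would be an infinite walk in `H_M(P)`, which an
acyclic rayless digraph does not have. The relation is therefore well founded, and as
principal ideals are finite it has an `ℕ`-valued rank; `ρ` is that rank squashed into
`[0, 1/2)`. Graded with finite ideals gives `deg z = deg x + 1` for every cover.
-/

section Digraph

variable {V : Type*} {A : V → V → Prop}

theorem DAcyclic.walk_not_closed (hac : DAcyclic A) :
    ∀ (n : ℕ) (w : ℕ → V), 0 < n → (∀ i < n, A (w i) (w (i + 1))) → w n ≠ w 0 := by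
  intro n
  induction n using Nat.strong_induction_on with
  | _ n ih =>
    intro w hn hw hclosed
    by_cases hrep : ∃ i j, i < j ∧ j < n ∧ w i = w j
    · obtain ⟨i, j, hij, hjn, hwij⟩ := hrep
      refine ih (j - i) (by omega) (fun k => w (i + k)) (by omega)
        (fun k hk => by simpa [Nat.add_assoc] using hw (i + k) (by omega)) ?_
      simp only [Nat.add_zero, Nat.add_sub_cancel' hij.le, hwij]
    · push Not at hrep
      refine hac ⟨n - 1, w, ⟨fun a b ha hb hab => ?_, fun i hi => hw i (by omega)⟩, ?_⟩
      · by_contra hne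
        rcases Nat.lt_or_gt_of_ne hne with h | h
        · exact hrep a b h (by omega) hab
        · exact hrep b a h (by omega) hab.symm
      · simpa [Nat.sub_add_cancel hn, hclosed] using hw (n - 1) (by omega)

theorem DAcyclic.wellFounded_flip (hac : DAcyclic A) (hray : Rayless A) :
    WellFounded (flip A) := by
  refine ⟨fun x => by_contra fun hx => ?_⟩
  obtain ⟨w, -, hw⟩ := not_acc_iff_exists_descending_chain.mp hx
  refine hray ⟨w, fun a b hab => ?_, hw⟩
  by_contra hne
  wlog hlt : a < b generalizing a b
  · exact this b a hab.symm (Ne.symm hne) (by omega)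
  refine hac.walk_not_closed (b - a) (fun k => w (a + k)) (by omega)
    (fun k _ => by simpa [flip, Nat.add_assoc] using hw (a + k)) ?_
  simp only [Nat.add_zero, Nat.add_sub_cancel' hlt.le, hab]

end Digraph

theorem WellFounded.exists_nat_rank {α : Type*} {r : α → α → Prop} (hwf : WellFounded r)
    (hfin : ∀ a, {b | r b a}.Finite) : ∃ ρ : α → ℕ, ∀ ⦃b a⦄, r b a → ρ b < ρ a := by
  let ρ : α → ℕ := hwf.fix fun a ih =>
    (hfin a).toFinset.attach.sup fun b => ih b.1 ((hfin a).mem_toFinset.mp b.2) + 1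
  refine ⟨ρ, fun b a hba => ?_⟩
  have hρa : ρ a = (hfin a).toFinset.attach.sup fun b => ρ b.1 + 1 := hwf.fix_eq _ a
  have hb : b ∈ (hfin a).toFinset := (hfin a).mem_toFinset.mpr hba
  have hle : ρ b + 1 ≤ _ :=
    Finset.le_sup (f := fun c : (hfin a).toFinset => ρ c.1 + 1) (Finset.mem_attach _ ⟨b, hb⟩)
  omega

theorem WellFounded.exists_rank_lt_half {α : Type*} {r : α → α → Prop} (hwf : WellFounded r)
    (hfin : ∀ a, {b | r b a}.Finite) :
    ∃ ρ : α → ℝ, (∀ a, 0 ≤ ρ a) ∧ (∀ a, ρ a < 1 / 2) ∧ ∀ ⦃b a⦄, r b a → ρ b < ρ a := by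
  obtain ⟨rank, hrank⟩ := hwf.exists_nat_rank hfin
  refine ⟨fun a => 1 / 2 - 1 / (rank a + 2), fun a => ?_, fun a => ?_, fun b a hba => ?_⟩
  · have : 1 / ((rank a : ℝ) + 2) ≤ 1 / 2 := by gcongr; linarith [(rank a).cast_nonneg (α := ℝ)]
    linarith
  · linarith [show 0 < 1 / ((rank a : ℝ) + 2) by positivity]
  · have : (rank b : ℝ) < rank a := by exact_mod_cast hrank hba
    dsimp only
    gcongr

section Poset

variable {P : Type*} [PartialOrder P]

theorem exists_isMaxChainIn_mem {x : P} (hx : (Set.Iic x).Finite) :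
    ∃ C : Set P, IsMaxChainIn x C ∧ x ∈ C := by
  have hchains : {C : Set P | IsChainIn x C}.Finite :=
    hx.finite_subsets.subset fun C hC => hC.1
  obtain ⟨C, hC, hCmax⟩ :=
    hchains.exists_maximalFor id _ ⟨∅, Set.empty_subset _, IsChain.empty⟩
  have hmax : ∀ D, IsChainIn x D → C ⊆ D → C = D :=
    fun D hD hCD => hCD.antisymm (hCmax hD hCD)
  have hins : IsChainIn x (insert x C) :=
    ⟨Set.insert_subset Set.self_mem_Iic hC.1,
      hC.2.insert fun b hb _ => Or.inr (hC.1 hb)⟩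
  refine ⟨C, ⟨hC, hmax⟩, ?_⟩
  rw [hmax _ hins (Set.subset_insert x C)]
  exact Set.mem_insert x C

theorem IsMaxChainIn.insert_of_covBy {x z : P} {C : Set P} (hC : IsMaxChainIn x C)
    (hxC : x ∈ C) (hxz : x ⋖ z) : IsMaxChainIn z (insert z C) := by
  have hCz : ∀ c ∈ C, c ≤ z := fun c hc => (hC.1.1 hc).trans hxz.le
  refine ⟨⟨Set.insert_subset Set.self_mem_Iic hCz,
    hC.1.2.insert fun b hb _ => Or.inr (hCz b hb)⟩, fun D hD hCD => hCD.antisymm fun d hd => ?_⟩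
  have hdz : d ≤ z := hD.1 hd
  have hxD : x ∈ D := hCD (Set.mem_insert_of_mem z hxC)
  rcases hD.2.total hd hxD with hdx | hxd
  · have hCeq : C = D ∩ Set.Iic x :=
      hC.2 _ ⟨Set.inter_subset_right, hD.2.mono Set.inter_subset_left⟩
        fun c hc => ⟨hCD (Set.mem_insert_of_mem z hc), hC.1.1 hc⟩
    exact Set.mem_insert_of_mem z (hCeq ▸ ⟨hd, hdx⟩)
  · rcases hxd.eq_or_lt with rfl | hxd
    · exact Set.mem_insert_of_mem z hxC
    · rw [(hdz.lt_or_eq.resolve_left (hxz.2 hxd))]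
      exact Set.mem_insert z C

theorem GradedDeg.deg_eq_add_one_of_covBy {deg : P → ℕ} (hgr : GradedDeg deg) {x z : P}
    (hx : (Set.Iic x).Finite) (hxz : x ⋖ z) : deg z = deg x + 1 := by
  obtain ⟨C, hC, hxC⟩ := exists_isMaxChainIn_mem hx
  have hzC : z ∉ C := fun hz => (hC.1.1 hz).not_gt hxz.lt
  obtain ⟨hCfin, hCcard⟩ := hgr x C hC
  obtain ⟨-, hzcard⟩ := hgr z _ (hC.insert_of_covBy hxC hxz)
  rw [Set.ncard_insert_of_notMem hzC hCfin, hCcard] at hzcard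
  omega

end Poset

namespace IsMatching

variable {P : Type*} [PartialOrder P] {M : Set (P × P)}

theorem fst_unique (hM : IsMatching M) {z₁ z₂ x : P} (h₁ : (z₁, x) ∈ M) (h₂ : (z₂, x) ∈ M) :
    z₁ = z₂ := by
  by_contra hne
  exact (hM.2 _ h₁ _ h₂ fun h => hne (congrArg Prod.fst h)).2.2.2 rfl

theorem snd_unique (hM : IsMatching M) {z x₁ x₂ : P} (h₁ : (z, x₁) ∈ M) (h₂ : (z, x₂) ∈ M) :
    x₁ = x₂ := by
  by_contra hne
  exact (hM.2 _ h₁ _ h₂ fun h => hne (congrArg Prod.snd h)).1 rfl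

theorem notMem_of_fst_mem (hM : IsMatching M) {z x y : P} (h : (z, x) ∈ M) : (y, z) ∉ M := by
  intro h'
  have hne : (z, x) ≠ (y, z) := fun heq => (hM.1 _ h).ne (congrArg Prod.snd heq)
  exact (hM.2 _ h _ h' hne).2.1 rfl

theorem subsingleton_of_le_iff {f : P → ℝ} (hM : IsMatching M)
    (hf : ∀ ⦃x z⦄, x ⋖ z → (f z ≤ f x ↔ (z, x) ∈ M)) (x : P) :
    {y | x ⋖ y ∧ f y ≤ f x}.Subsingleton ∧ {y | y ⋖ x ∧ f x ≤ f y}.Subsingleton :=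
  ⟨fun _ hy _ hy' => hM.fst_unique ((hf hy.1).1 hy.2) ((hf hy'.1).1 hy'.2),
    fun _ hy _ hy' => hM.snd_unique ((hf hy.1).1 hy.2) ((hf hy'.1).1 hy'.2)⟩

theorem setOf_le_eq_of_le_iff {f : P → ℝ} (hM : IsMatching M)
    (hf : ∀ ⦃x z⦄, x ⋖ z → (f z ≤ f x ↔ (z, x) ∈ M)) :
    {e : P × P | e.2 ⋖ e.1 ∧ f e.1 ≤ f e.2} = M :=
  Set.ext fun e => ⟨fun he => (hf he.1).1 he.2, fun he => ⟨hM.1 e he, (hf (hM.1 e he)).2 he⟩⟩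

end IsMatching

section MatchLt

variable {P : Type*} [PartialOrder P] {M : Set (P × P)}

def MatchLt (M : Set (P × P)) (e' e : P × P) : Prop :=
  e' ∈ M ∧ e ∈ M ∧ e' ≠ e ∧ e'.2 ⋖ e.1

theorem IsMorse.wellFounded_matchLt (hM : IsMorse M) (hray : Rayless (HasseM M)) :
    WellFounded (MatchLt M) := by
  refine Subrelation.wf (fun {e' e} h => ?_)
    (InvImage.wf Prod.fst (hM.2.wellFounded_flip hray).transGen)
  obtain ⟨he', he, hne, hcov⟩ := h
  have hdown : HasseM M e.1 e'.2 := Or.inl ⟨hcov, fun hmem =>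
    hne (Prod.ext (hM.1.fst_unique he' hmem) (hM.1.snd_unique hmem he))⟩
  have hup : HasseM M e'.2 e'.1 := Or.inr he'
  exact .head hup (.single hdown)

theorem IsMatching.finite_matchLt (hM : IsMatching M) {e : P × P} (he : (Set.Iic e.1).Finite) :
    {e' | MatchLt M e' e}.Finite := by
  refine Set.Finite.of_finite_image (f := Prod.snd) (he.subset ?_) fun a ha b hb hab => ?_
  · rintro _ ⟨e', he', rfl⟩
    exact he'.2.2.2.le
  · exact Prod.ext (hM.fst_unique (hab ▸ ha.1) hb.1) hab

end MatchLt

section MatchingMorseFn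

variable {P : Type*} {M : Set (P × P)} {deg : P → ℕ} {ρ : P × P → ℝ}

open Classical in
noncomputable def matchingMorseFn (M : Set (P × P)) (deg : P → ℕ) (ρ : P × P → ℝ) (x : P) : ℝ :=
  if h : ∃ z, (z, x) ∈ M then deg x + 1 / 2 + ρ (h.choose, x)
  else if h : ∃ y, (x, y) ∈ M then deg x - 1 / 2 + ρ (x, h.choose)
  else deg x

theorem matchingMorseFn_le_of_forall_notMem (hρ : ∀ e, ρ e ≤ 1 / 2) {x : P}
    (hx : ∀ z, (z, x) ∉ M) : matchingMorseFn M deg ρ x ≤ deg x := by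
  rw [matchingMorseFn, dif_neg fun ⟨z, h⟩ => hx z h]
  split_ifs with hup
  · linarith [hρ (x, hup.choose)]
  · rfl

theorem le_matchingMorseFn_of_forall_notMem (hρ : ∀ e, 0 ≤ ρ e) {x : P}
    (hx : ∀ y, (x, y) ∉ M) : (deg x : ℝ) ≤ matchingMorseFn M deg ρ x := by
  rw [matchingMorseFn]
  split_ifs with hlow hup
  · linarith [hρ (hlow.choose, x)]
  · exact absurd hup.choose_spec (hx _)
  · rfl

theorem matchingMorseFn_of_critical {c : P} (hc : Critical M c) :
    matchingMorseFn M deg ρ c = deg c := by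
  have hlow : ¬ ∃ z, (z, c) ∈ M := fun ⟨z, h⟩ => (hc _ h).2 rfl
  have hup : ¬ ∃ y, (c, y) ∈ M := fun ⟨y, h⟩ => (hc _ h).1 rfl
  rw [matchingMorseFn, dif_neg hlow, dif_neg hup]

variable [PartialOrder P]

theorem matchingMorseFn_snd (hM : IsMatching M) {z x : P} (h : (z, x) ∈ M) :
    matchingMorseFn M deg ρ x = deg x + 1 / 2 + ρ (z, x) := by
  have hex : ∃ z, (z, x) ∈ M := ⟨z, h⟩
  rw [matchingMorseFn, dif_pos hex, hM.fst_unique hex.choose_spec h]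

theorem matchingMorseFn_fst (hM : IsMatching M) {z x : P} (h : (z, x) ∈ M) :
    matchingMorseFn M deg ρ z = deg z - 1 / 2 + ρ (z, x) := by
  have hnex : ¬ ∃ y, (y, z) ∈ M := fun ⟨_, h'⟩ => hM.notMem_of_fst_mem h h'
  have hex : ∃ y, (z, y) ∈ M := ⟨x, h⟩
  rw [matchingMorseFn, dif_neg hnex, dif_pos hex, hM.snd_unique hex.choose_spec h]

theorem matchingMorseFn_lt_of_notMem (hM : IsMatching M) (hρ0 : ∀ e, 0 ≤ ρ e)
    (hρ1 : ∀ e, ρ e < 1 / 2) (hρ : ∀ ⦃e' e⦄, MatchLt M e' e → ρ e' < ρ e) {x z : P}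
    (hxz : x ⋖ z) (hdeg : deg z = deg x + 1) (hzx : (z, x) ∉ M) :
    matchingMorseFn M deg ρ x < matchingMorseFn M deg ρ z := by
  have hdeg' : (deg z : ℝ) = deg x + 1 := by exact_mod_cast hdeg
  by_cases hlow : ∃ z', (z', x) ∈ M
  · obtain ⟨z', hz'x⟩ := hlow
    rw [matchingMorseFn_snd hM hz'x]
    by_cases hup : ∃ x', (z, x') ∈ M
    · obtain ⟨x', hzx'⟩ := hup
      have hlt : MatchLt M (z', x) (z, x') :=
        ⟨hz'x, hzx', fun h => hzx ((Prod.mk.inj h).1 ▸ hz'x), hxz⟩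
      rw [matchingMorseFn_fst hM hzx']
      linarith [hρ hlt]
    · have := le_matchingMorseFn_of_forall_notMem (deg := deg) hρ0 fun y h => hup ⟨y, h⟩
      linarith [hρ1 (z', x)]
  · have hx := matchingMorseFn_le_of_forall_notMem (deg := deg) (fun e => (hρ1 e).le)
      fun z' h => hlow ⟨z', h⟩
    by_cases hup : ∃ x', (z, x') ∈ M
    · obtain ⟨x', hzx'⟩ := hup
      rw [matchingMorseFn_fst hM hzx']
      linarith [hρ0 (z, x')]
    · have := le_matchingMorseFn_of_forall_notMem (deg := deg) hρ0 fun y h => hup ⟨y, h⟩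
      linarith

theorem matchingMorseFn_le_iff (hM : IsMatching M) (hρ0 : ∀ e, 0 ≤ ρ e)
    (hρ1 : ∀ e, ρ e < 1 / 2) (hρ : ∀ ⦃e' e⦄, MatchLt M e' e → ρ e' < ρ e) {x z : P}
    (hxz : x ⋖ z) (hdeg : deg z = deg x + 1) :
    matchingMorseFn M deg ρ z ≤ matchingMorseFn M deg ρ x ↔ (z, x) ∈ M := by
  refine ⟨fun hle => by_contra fun hzx =>
    (matchingMorseFn_lt_of_notMem hM hρ0 hρ1 hρ hxz hdeg hzx).not_ge hle, fun hzx => ?_⟩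
  rw [matchingMorseFn_snd hM hzx, matchingMorseFn_fst hM hzx, hdeg]
  push_cast
  linarith

end MatchingMorseFn

/-- every rayless Morse matching `M` on a graded poset with finite
principal ideals is induced by a self-indexing discrete Morse function:
there is `f : P → ℝ` such that (i) for each `x` the sets
`u_f(x) = {y : y ⋗ x, f y ≤ f x}` and `d_f(x) = {y : y ⋖ x, f y ≥ f x}` each
have at most one element, (ii) the set of Hasse arrows `(z, x)` with `z ⋗ x` and
`f z ≤ f x` is exactly `M`, and (iii) `f c = deg c` for every critical `c`. -/
theorem stmt17 {P : Type*} [PartialOrder P] (deg : P → ℕ)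
    (hgraded : GradedDeg deg) (hfin : ∀ x : P, (Set.Iic x).Finite)
    (M : Set (P × P)) (hM : IsMorse M) (hrayless : Rayless (HasseM M)) :
    ∃ f : P → ℝ,
      (∀ x : P, {y : P | x ⋖ y ∧ f y ≤ f x}.Subsingleton ∧
        {y : P | y ⋖ x ∧ f x ≤ f y}.Subsingleton) ∧
      {e : P × P | e.2 ⋖ e.1 ∧ f e.1 ≤ f e.2} = M ∧
      (∀ c : P, Critical M c → f c = (deg c : ℝ)) := by
  obtain ⟨ρ, hρ0, hρ1, hρ⟩ := (hM.wellFounded_matchLt hrayless).exists_rank_lt_half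
    fun e => hM.1.finite_matchLt (hfin e.1)
  have hle_iff : ∀ ⦃x z⦄, x ⋖ z →
      (matchingMorseFn M deg ρ z ≤ matchingMorseFn M deg ρ x ↔ (z, x) ∈ M) := fun x _ hxz =>
    matchingMorseFn_le_iff hM.1 hρ0 hρ1 hρ hxz (hgraded.deg_eq_add_one_of_covBy (hfin x) hxz)
  exact ⟨matchingMorseFn M deg ρ, hM.1.subsingleton_of_le_iff hle_iff,
    hM.1.setOf_le_eq_of_le_iff hle_iff, fun c hc => matchingMorseFn_of_critical hc⟩
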